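/- arXiv:2210.06843 — 3 statements merged into one kernel-verified Lean document; each statement's English description precedes it below -/
import Mathlib

section
/- Two vertices with the same stable color refinement color have equal Katz centrality: if A^⊤ H = H B for an indicator matrix H of a partition with u, v in the same class, and a is a scalar with |a| · ‖A‖ < 1 (so the Katz series converges), then (∑_{m=0}^∞ a^m (A^⊤)^m 𝟙)_u = (∑_{m=0}^∞ a^m (A^⊤)^m 𝟙)_v. -/
attribute [local instance] Matrix.linftyOpNormedAddCommGroup Matrix.linftyOpNormedRing

/-- Two vertices with the same stable color refinement color (i.e. in the same class of an
in-equitable partition, encoded by `A^⊤ H = H B` for an indicator matrix `H`) have equal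
Katz centrality, provided `|a| ⬝ ‖A‖ < 1` so that the Katz series converges. -/
theorem katz_centrality_eq_of_same_class {n k : ℕ} (A : Matrix (Fin n) (Fin n) ℝ)
    (f : Fin n → Fin k)
    (H : Matrix (Fin n) (Fin k) ℝ)
    (hH : H = Matrix.of fun v i => if f v = i then (1 : ℝ) else 0)
    (B : Matrix (Fin k) (Fin k) ℝ) (hint : A.transpose * H = H * B)
    (a : ℝ) (ha : |a| * ‖A‖ < 1)
    (u v : Fin n) (huv : f u = f v) :
    (∑' m : ℕ, a ^ m • ((A.transpose) ^ m).mulVec (fun _ => 1)) u =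
    (∑' m : ℕ, a ^ m • ((A.transpose) ^ m).mulVec (fun _ => 1)) v := by
  -- H applied to the all-ones vector gives the all-ones vector
  have hH1 : H.mulVec (fun _ => (1 : ℝ)) = fun _ => 1 := by
    funext w
    simp [hH, Matrix.mulVec, dotProduct]
  -- (Aᵀ)^m * H = H * B^m
  have hpow : ∀ m : ℕ, A.transpose ^ m * H = H * B ^ m := by
    intro m
    induction m with
    | zero => simp
    | succ m ih =>
      rw [pow_succ', pow_succ', Matrix.mul_assoc, ih, ← Matrix.mul_assoc, hint,
        Matrix.mul_assoc]
  -- each term of the series agrees at u and v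
  have hterm : ∀ m : ℕ, ((A.transpose ^ m).mulVec (fun _ => 1)) u
      = ((A.transpose ^ m).mulVec (fun _ => 1)) v := by
    intro m
    have : (A.transpose ^ m).mulVec (fun _ => 1)
        = H.mulVec ((B ^ m).mulVec (fun _ => 1)) := by
      conv_lhs => rw [← hH1, Matrix.mulVec_mulVec, hpow, ← Matrix.mulVec_mulVec]
    rw [this]
    simp [hH, Matrix.mulVec, dotProduct, huv]
  set g : ℕ → Fin n → ℝ := fun m => a ^ m • (A.transpose ^ m).mulVec (fun _ => 1) with hg
  by_cases hs : Summable g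
  · rw [tsum_apply hs, tsum_apply hs]
    refine tsum_congr fun m => ?_
    simp only [hg, Pi.smul_apply, smul_eq_mul, hterm m]
  · rw [tsum_eq_zero_of_not_summable hs]
    rfl
end

section
/- An edge swap preserves color refinement colors up to depth d+1 when the swapped endpoints have equal depth-d colors: if c^d(v₁) = c^d(v₂) and c^d(u₁) = c^d(u₂) in G, and G' is obtained from G by the edge swap replacing u₁v₁, u₂v₂ with u₁v₂, u₂v₁ (all four vertices distinct, new edges not present), then for all t ≤ d+1 and all vertices w, the depth-t color refinement color of w in G' equals that in G (starting both refinements from the same initial coloring). -/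
/-- The type of color refinement colors at depth `d`, starting from colors in `C`. -/
def ColorType (C : Type*) : ℕ → Type _
  | 0 => C
  | d + 1 => ColorType C d × Multiset (ColorType C d)

open scoped Classical in
/-- The color refinement iteration on a finite simple graph `G` with initial coloring `c0`:
`CR G c0 (d+1) v = (CR G c0 d v, {{CR G c0 d x : x ∈ N(v)}})`. -/
noncomputable def CR {V C : Type*} [Fintype V] (G : SimpleGraph V) (c0 : V → C) :
    (d : ℕ) → V → ColorType C d
  | 0 => c0
  | d + 1 => fun v =>
      (CR G c0 d v, (Finset.univ.filter (fun x => G.Adj x v)).val.map (CR G c0 d))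


open scoped Classical

lemma CR_succ {V C : Type*} [Fintype V] (G : SimpleGraph V) (c0 : V → C) (d : ℕ) (v : V) :
    CR G c0 (d + 1) v
      = (CR G c0 d v, (Finset.univ.filter (fun x => G.Adj x v)).val.map (CR G c0 d)) := rfl

lemma CR_mono {V C : Type*} [Fintype V] (G : SimpleGraph V) (c0 : V → C) :
    ∀ d t, t ≤ d → ∀ x y : V, CR G c0 d x = CR G c0 d y → CR G c0 t x = CR G c0 t y := by
  intro d
  induction d with
  | zero => intro t ht x y h; interval_cases t; exact h
  | succ d ih =>
    intro t ht x y h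
    rcases Nat.lt_succ_iff_lt_or_eq.mp (Nat.lt_succ_of_le ht) with h' | rfl
    · have h1 : CR G c0 d x = CR G c0 d y :=
        congrArg (Prod.fst (α := ColorType C d) (β := Multiset (ColorType C d))) h
      exact ih t (Nat.lt_succ_iff.mp h') x y h1
    · exact h

lemma swap_map {V C' : Type*} [DecidableEq V] (f : V → C') (S : Finset V) (a b : V)
    (ha : a ∈ S) (hb : b ∉ S) (hf : f a = f b) :
    (insert b (S.erase a)).val.map f = S.val.map f := by
  have hb' : b ∉ S.erase a := fun h => hb (Finset.mem_of_mem_erase h)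
  have h1 : (insert b (S.erase a)).val = b ::ₘ (S.val.erase a) := by
    rw [Finset.insert_val_of_notMem hb', Finset.erase_val]
  have h2 : S.val = a ::ₘ S.val.erase a := (Multiset.cons_erase ha).symm
  rw [h1, Multiset.map_cons]
  conv_rhs => rw [h2, Multiset.map_cons]
  rw [hf]

set_option maxHeartbeats 1000000 in
lemma swap_adj_iff {V : Type*} (G : SimpleGraph V) (u₁ v₁ u₂ v₂ : V)
    (hu1v2 : u₁ ≠ v₂) (hv1u2 : v₁ ≠ u₂) (a b : V) :
    (SimpleGraph.fromEdgeSet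
      ((G.edgeSet \ {s(u₁, v₁), s(u₂, v₂)}) ∪ {s(u₁, v₂), s(u₂, v₁)})).Adj a b ↔
      ((G.Adj a b ∧ ¬(a = u₁ ∧ b = v₁) ∧ ¬(a = v₁ ∧ b = u₁) ∧
        ¬(a = u₂ ∧ b = v₂) ∧ ¬(a = v₂ ∧ b = u₂)) ∨
       ((a = u₁ ∧ b = v₂) ∨ (a = v₂ ∧ b = u₁) ∨ (a = u₂ ∧ b = v₁) ∨ (a = v₁ ∧ b = u₂))) := by
  simp only [SimpleGraph.fromEdgeSet_adj, Set.mem_union, Set.mem_diff, Set.mem_insert_iff,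
    Set.mem_singleton_iff, SimpleGraph.mem_edgeSet, Sym2.eq_iff, not_or]
  constructor
  · rintro ⟨h | h, hab⟩ <;> tauto
  · rintro (⟨ha, hn⟩ | h)
    · exact ⟨Or.inl ⟨ha, by tauto⟩, ha.ne⟩
    · rcases h with ⟨rfl, rfl⟩ | ⟨rfl, rfl⟩ | ⟨rfl, rfl⟩ | ⟨rfl, rfl⟩
      · exact ⟨Or.inr (Or.inl (Or.inl ⟨rfl, rfl⟩)), hu1v2⟩
      · exact ⟨Or.inr (Or.inl (Or.inr ⟨rfl, rfl⟩)), fun e => hu1v2 e.symm⟩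
      · exact ⟨Or.inr (Or.inr (Or.inl ⟨rfl, rfl⟩)), fun e => hv1u2 e.symm⟩
      · exact ⟨Or.inr (Or.inr (Or.inr ⟨rfl, rfl⟩)), hv1u2⟩


set_option maxHeartbeats 1000000 in
/-- An edge swap preserves color refinement colors up to depth `d+1` when the swapped
endpoints have equal depth-`d` colors: if `c^d(v₁) = c^d(v₂)` and `c^d(u₁) = c^d(u₂)` in `G`,
and `G'` is obtained from `G` by replacing the edges `u₁v₁`, `u₂v₂` (four distinct vertices)
with the previously absent edges `u₁v₂`, `u₂v₁`, then for all `t ≤ d+1` and all vertices `w`,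
the depth-`t` color of `w` in `G'` equals that in `G`. -/
theorem edge_swap_preserves_CR {V C : Type*} [Fintype V] (G : SimpleGraph V) (c0 : V → C)
    (d : ℕ) (u₁ v₁ u₂ v₂ : V) (hdist : [u₁, v₁, u₂, v₂].Nodup)
    (h1 : G.Adj u₁ v₁) (h2 : G.Adj u₂ v₂)
    (h3 : ¬ G.Adj u₁ v₂) (h4 : ¬ G.Adj u₂ v₁)
    (hcv : CR G c0 d v₁ = CR G c0 d v₂) (hcu : CR G c0 d u₁ = CR G c0 d u₂) :
    ∀ t ≤ d + 1, ∀ w : V,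
      CR (SimpleGraph.fromEdgeSet
            ((G.edgeSet \ {s(u₁, v₁), s(u₂, v₂)}) ∪ {s(u₁, v₂), s(u₂, v₁)})) c0 t w =
        CR G c0 t w := by
  classical
  simp only [List.nodup_cons, List.mem_cons, List.not_mem_nil, or_false, List.mem_singleton,
    not_or, List.nodup_nil, and_true] at hdist
  obtain ⟨⟨hu1v1, hu1u2, hu1v2⟩, ⟨hv1u2, hv1v2⟩, hu2v2⟩ := hdist
  set G' := SimpleGraph.fromEdgeSet
      ((G.edgeSet \ {s(u₁, v₁), s(u₂, v₂)}) ∪ {s(u₁, v₂), s(u₂, v₁)}) with hG'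
  have hadj : ∀ a b : V, G'.Adj a b ↔
      ((G.Adj a b ∧ ¬(a = u₁ ∧ b = v₁) ∧ ¬(a = v₁ ∧ b = u₁) ∧
        ¬(a = u₂ ∧ b = v₂) ∧ ¬(a = v₂ ∧ b = u₂)) ∨
       ((a = u₁ ∧ b = v₂) ∨ (a = v₂ ∧ b = u₁) ∨ (a = u₂ ∧ b = v₁) ∨ (a = v₁ ∧ b = u₂))) := by
    rw [hG']; exact swap_adj_iff G u₁ v₁ u₂ v₂ hu1v2 hv1u2
  have hfilt : ∀ w : V,
      (Finset.univ.filter (fun x => G'.Adj x w)) =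
      if w = v₁ then insert u₂ ((Finset.univ.filter (fun x => G.Adj x v₁)).erase u₁)
      else if w = v₂ then insert u₁ ((Finset.univ.filter (fun x => G.Adj x v₂)).erase u₂)
      else if w = u₁ then insert v₂ ((Finset.univ.filter (fun x => G.Adj x u₁)).erase v₁)
      else if w = u₂ then insert v₁ ((Finset.univ.filter (fun x => G.Adj x u₂)).erase v₂)
      else (Finset.univ.filter (fun x => G.Adj x w)) := by
    intro w
    split_ifs with e1 e2 e3 e4 <;> subst_vars <;> ext x <;>
      simp only [Finset.mem_filter, Finset.mem_univ, true_and, Finset.mem_insert,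
        Finset.mem_erase, hadj] <;>
      constructor
    · rintro (⟨ha, hn⟩ | h) <;> tauto
    · rintro (rfl | ⟨hx, ha⟩)
      · tauto
      · left; refine ⟨ha, ?_, ?_, ?_, ?_⟩ <;> rintro ⟨rfl, h⟩ <;> tauto
    · rintro (⟨ha, hn⟩ | h) <;> tauto
    · rintro (rfl | ⟨hx, ha⟩)
      · tauto
      · left; refine ⟨ha, ?_, ?_, ?_, ?_⟩ <;> rintro ⟨rfl, h⟩ <;> tauto
    · rintro (⟨ha, hn⟩ | h) <;> tauto
    · rintro (rfl | ⟨hx, ha⟩)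
      · tauto
      · left; refine ⟨ha, ?_, ?_, ?_, ?_⟩ <;> rintro ⟨rfl, h⟩ <;> tauto
    · rintro (⟨ha, hn⟩ | h) <;> tauto
    · rintro (rfl | ⟨hx, ha⟩)
      · tauto
      · left; refine ⟨ha, ?_, ?_, ?_, ?_⟩ <;> rintro ⟨rfl, h⟩ <;> tauto
    · rintro (⟨ha, hn⟩ | h) <;> tauto
    · intro ha
      left; refine ⟨ha, ?_, ?_, ?_, ?_⟩ <;> rintro ⟨rfl, rfl⟩ <;> tauto
  have hn3 : ¬ G.Adj v₂ u₁ := fun h => h3 h.symm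
  have hn4 : ¬ G.Adj v₁ u₂ := fun h => h4 h.symm
  intro t
  induction t with
  | zero => intro _ w; rfl
  | succ t ih =>
    intro ht w
    have ht' : t ≤ d := Nat.succ_le_succ_iff.mp ht
    have ihf : CR G' c0 t = CR G c0 t := funext (ih (le_trans ht' (Nat.le_succ d)))
    have hcv' : CR G c0 t v₁ = CR G c0 t v₂ := CR_mono G c0 d t ht' _ _ hcv
    have hcu' : CR G c0 t u₁ = CR G c0 t u₂ := CR_mono G c0 d t ht' _ _ hcu
    rw [CR_succ, CR_succ, ihf]
    congr 1
    rw [show @Finset.filter V (fun x => G'.Adj x w) (fun a => Classical.propDecidable _)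
      Finset.univ = _ by convert hfilt w]
    split_ifs with e1 e2 e3 e4 <;> subst_vars
    · exact swap_map _ _ u₁ u₂ (by simpa using h1) (by simpa using h4) hcu'
    · exact swap_map _ _ u₂ u₁ (by simpa using h2) (by simpa using h3) hcu'.symm
    · exact swap_map _ _ v₁ v₂ (by simpa using h1.symm) (by simpa using hn3) hcv'
    · exact swap_map _ _ v₂ v₁ (by simpa using h2.symm) (by simpa using hn4) hcv'.symm
    · rfl
end

section
/- The normalized HITS authority iterates are shared between two graphs intertwined by the same equitable partition: if A₁ H = H B and A₂ H = H B and A₁^⊤ H = H C and A₂^⊤ H = H C for an indicator matrix H, then the iterations a_i^{(k+1)} = A_i^⊤ h_i^{(k)} / ‖A_i^⊤ h_i^{(k)}‖ and h_i^{(k+1)} = A_i a_i^{(k+1)} / ‖A_i a_i^{(k+1)}‖ with h_i^{(0)} = 𝟙 satisfy a₁^{(k)} = a₂^{(k)} and h₁^{(k)} = h₂^{(k)} for all k, and each iterate lies in the column span of H. -/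
lemma hits_key {n k : ℕ} (A : Matrix (Fin n) (Fin n) ℝ) (H : Matrix (Fin n) (Fin k) ℝ)
    (D : Matrix (Fin k) (Fin k) ℝ) (hAD : A * H = H * D) (y : Fin k → ℝ) :
    A.mulVec (H.mulVec y) = H.mulVec (D.mulVec y) := by
  rw [Matrix.mulVec_mulVec, hAD, ← Matrix.mulVec_mulVec]

lemma hits_smul {n k : ℕ} (H : Matrix (Fin n) (Fin k) ℝ) (c : ℝ) (y : Fin k → ℝ) :
    c • H.mulVec y = H.mulVec (c • y) := by
  rw [Matrix.mulVec_smul]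

/-- The normalized HITS iterates are shared between two graphs intertwined by the same
equitable partition: if `A₁ H = H B = A₂ H` and `A₁ᵀ H = H C = A₂ᵀ H` for a partition
indicator matrix `H`, then the normalized authority/hub iterations (started from the all-ones
vector, with all normalizing values nonzero) coincide for the two graphs, and every iterate
lies in the column span of `H`. -/
theorem hits_iterates_agree {n k : ℕ} (A₁ A₂ : Matrix (Fin n) (Fin n) ℝ)
    (hA₁ : ∀ i j, 0 ≤ A₁ i j) (hA₂ : ∀ i j, 0 ≤ A₂ i j)
    (f : Fin n → Fin k) (hf : Function.Surjective f)
    (H : Matrix (Fin n) (Fin k) ℝ)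
    (hH : H = Matrix.of fun v i => if f v = i then (1 : ℝ) else 0)
    (B C : Matrix (Fin k) (Fin k) ℝ)
    (h1 : A₁ * H = H * B) (h2 : A₂ * H = H * B)
    (h1t : A₁.transpose * H = H * C) (h2t : A₂.transpose * H = H * C)
    (nrm : (Fin n → ℝ) → ℝ)
    (a₁ a₂ h₁ h₂ : ℕ → Fin n → ℝ)
    (hh₁0 : h₁ 0 = fun _ => 1) (hh₂0 : h₂ 0 = fun _ => 1)
    (ha₁ : ∀ m : ℕ, a₁ (m + 1) = (nrm (A₁.transpose.mulVec (h₁ m)))⁻¹ •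
      A₁.transpose.mulVec (h₁ m))
    (ha₂ : ∀ m : ℕ, a₂ (m + 1) = (nrm (A₂.transpose.mulVec (h₂ m)))⁻¹ •
      A₂.transpose.mulVec (h₂ m))
    (hh₁ : ∀ m : ℕ, h₁ (m + 1) = (nrm (A₁.mulVec (a₁ (m + 1))))⁻¹ • A₁.mulVec (a₁ (m + 1)))
    (hh₂ : ∀ m : ℕ, h₂ (m + 1) = (nrm (A₂.mulVec (a₂ (m + 1))))⁻¹ • A₂.mulVec (a₂ (m + 1)))
    (hnz₁ : ∀ m : ℕ, nrm (A₁.transpose.mulVec (h₁ m)) ≠ 0)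
    (hnz₂ : ∀ m : ℕ, nrm (A₂.transpose.mulVec (h₂ m)) ≠ 0)
    (hnz₁' : ∀ m : ℕ, nrm (A₁.mulVec (a₁ (m + 1))) ≠ 0)
    (hnz₂' : ∀ m : ℕ, nrm (A₂.mulVec (a₂ (m + 1))) ≠ 0) :
    ∀ m : ℕ, a₁ (m + 1) = a₂ (m + 1) ∧ h₁ m = h₂ m ∧
      (∃ y : Fin k → ℝ, h₁ m = H.mulVec y) ∧
      (∃ y : Fin k → ℝ, a₁ (m + 1) = H.mulVec y) := by
  -- first: from h₁ m = h₂ m = H y, derive everything at level m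
  have step : ∀ m : ℕ, (h₁ m = h₂ m ∧ ∃ y, h₁ m = H.mulVec y) →
      a₁ (m + 1) = a₂ (m + 1) ∧ (∃ y, a₁ (m + 1) = H.mulVec y) := by
    rintro m ⟨heq, y, hy⟩
    have e1 : A₁.transpose.mulVec (h₁ m) = H.mulVec (C.mulVec y) := by
      rw [hy, hits_key _ _ _ h1t]
    have e2 : A₂.transpose.mulVec (h₂ m) = H.mulVec (C.mulVec y) := by
      rw [← heq, hy, hits_key _ _ _ h2t]
    constructor
    · rw [ha₁, ha₂, e1, e2]
    · exact ⟨_, by rw [ha₁, e1, hits_smul]⟩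
  have step' : ∀ m : ℕ, (a₁ (m + 1) = a₂ (m + 1) ∧ ∃ y, a₁ (m + 1) = H.mulVec y) →
      h₁ (m + 1) = h₂ (m + 1) ∧ (∃ y, h₁ (m + 1) = H.mulVec y) := by
    rintro m ⟨heq, y, hy⟩
    have e1 : A₁.mulVec (a₁ (m + 1)) = H.mulVec (B.mulVec y) := by
      rw [hy, hits_key _ _ _ h1]
    have e2 : A₂.mulVec (a₂ (m + 1)) = H.mulVec (B.mulVec y) := by
      rw [← heq, hy, hits_key _ _ _ h2]
    constructor
    · rw [hh₁, hh₂, e1, e2]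
    · exact ⟨_, by rw [hh₁, e1, hits_smul]⟩
  have base : h₁ 0 = h₂ 0 ∧ ∃ y, h₁ 0 = H.mulVec y := by
    refine ⟨by rw [hh₁0, hh₂0], fun _ => 1, ?_⟩
    rw [hh₁0, hH]
    funext v
    simp [Matrix.mulVec, dotProduct]
  intro m
  induction m with
  | zero =>
    obtain ⟨ha, hy⟩ := step 0 base
    exact ⟨ha, base.1, base.2, hy⟩
  | succ m ih =>
    obtain ⟨haeq, _, _, hay⟩ := ih
    have hh := step' m ⟨haeq, hay⟩
    obtain ⟨ha, hy⟩ := step (m + 1) hh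
    exact ⟨ha, hh.1, hh.2, hy⟩
end
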